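/- arXiv:1002.3817 — 7 statements merged into one kernel-verified Lean document; each statement's English description precedes it below -/
import Mathlib

section
/- Let (U, ν_U) and (V, ν_V) be fuzzy anti-normed real linear spaces and let T : U → V be a map and x₀ ∈ U. Then T is fuzzy anti-continuous at x₀ if and only if T is sequentially fuzzy anti-continuous at x₀. -/
open Filter Topology

structure IsTConorm (d : ℝ → ℝ → ℝ) : Prop where
  mem : ∀ a ∈ Set.Icc (0:ℝ) 1, ∀ b ∈ Set.Icc (0:ℝ) 1, d a b ∈ Set.Icc (0:ℝ) 1
  comm : ∀ a ∈ Set.Icc (0:ℝ) 1, ∀ b ∈ Set.Icc (0:ℝ) 1, d a b = d b a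
  assoc : ∀ a ∈ Set.Icc (0:ℝ) 1, ∀ b ∈ Set.Icc (0:ℝ) 1, ∀ c ∈ Set.Icc (0:ℝ) 1,
    d (d a b) c = d a (d b c)
  zero_right : ∀ a ∈ Set.Icc (0:ℝ) 1, d a 0 = a
  mono : ∀ a b c e : ℝ, a ∈ Set.Icc (0:ℝ) 1 → b ∈ Set.Icc (0:ℝ) 1 →
    c ∈ Set.Icc (0:ℝ) 1 → e ∈ Set.Icc (0:ℝ) 1 → a ≤ c → b ≤ e → d a b ≤ d c e

structure IsFuzzyAntiNorm (V : Type*) [AddCommGroup V] [Module ℝ V]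
    (d : ℝ → ℝ → ℝ) (nu : V → ℝ → ℝ) : Prop where
  mem_Icc : ∀ (x : V) (t : ℝ), nu x t ∈ Set.Icc (0:ℝ) 1
  eq_one_of_nonpos : ∀ (x : V) (t : ℝ), t ≤ 0 → nu x t = 1
  eq_zero_iff : ∀ (x : V) (t : ℝ), 0 < t → (nu x t = 0 ↔ x = 0)
  smul_eq : ∀ (c : ℝ) (x : V) (t : ℝ), 0 < t → c ≠ 0 → nu (c • x) t = nu x (t / |c|)
  add_le : ∀ (x y : V) (s t : ℝ), nu (x + y) (s + t) ≤ d (nu x s) (nu y t)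
  tendsto_zero : ∀ x : V, Filter.Tendsto (nu x) Filter.atTop (nhds 0)

section Defs

variable {U V : Type*} [AddCommGroup U] [AddCommGroup V]

/-- T is strongly fuzzy anti-continuous at x₀. -/
def StronglyFuzzyAntiContinuousAt (nuU : U → ℝ → ℝ) (nuV : V → ℝ → ℝ)
    (T : U → V) (x₀ : U) : Prop :=
  ∀ ε > 0, ∃ δ > 0, ∀ x : U, nuV (T x - T x₀) ε ≤ nuU (x - x₀) δ

/-- T is weakly fuzzy anti-continuous at x₀. -/
def WeaklyFuzzyAntiContinuousAt (nuU : U → ℝ → ℝ) (nuV : V → ℝ → ℝ)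
    (T : U → V) (x₀ : U) : Prop :=
  ∀ ε > 0, ∀ α ∈ Set.Ioo (0:ℝ) 1, ∃ δ > 0, ∀ x : U,
    nuU (x - x₀) δ ≤ 1 - α → nuV (T x - T x₀) ε ≤ 1 - α

/-- T is fuzzy anti-continuous at x₀. -/
def FuzzyAntiContinuousAt (nuU : U → ℝ → ℝ) (nuV : V → ℝ → ℝ)
    (T : U → V) (x₀ : U) : Prop :=
  ∀ ε > 0, ∀ α ∈ Set.Ioo (0:ℝ) 1, ∃ δ > 0, ∃ β ∈ Set.Ioo (0:ℝ) 1, ∀ x : U,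
    nuU (x - x₀) δ < β → nuV (T x - T x₀) ε < α

/-- T is sequentially fuzzy anti-continuous at x₀. -/
def SeqFuzzyAntiContinuousAt (nuU : U → ℝ → ℝ) (nuV : V → ℝ → ℝ)
    (T : U → V) (x₀ : U) : Prop :=
  ∀ xs : ℕ → U,
    (∀ t > 0, Filter.Tendsto (fun n => nuU (xs n - x₀) t) Filter.atTop (nhds 0)) →
    ∀ t > 0, Filter.Tendsto (fun n => nuV (T (xs n) - T x₀) t) Filter.atTop (nhds 0)

/-- T is strongly fuzzy anti-bounded. -/
def StronglyFuzzyAntiBounded (nuU : U → ℝ → ℝ) (nuV : V → ℝ → ℝ) (T : U → V) : Prop :=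
  ∃ M > 0, ∀ x : U, ∀ t > 0, nuV (T x) t ≤ nuU x (t / M)

/-- T is weakly fuzzy anti-bounded. -/
def WeaklyFuzzyAntiBounded (nuU : U → ℝ → ℝ) (nuV : V → ℝ → ℝ) (T : U → V) : Prop :=
  ∀ α ∈ Set.Ioo (0:ℝ) 1, ∃ M > 0, ∀ x : U, ∀ t > 0,
    nuU x (t / M) ≤ 1 - α → nuV (T x) t ≤ 1 - α

/-- The α-anti-norm ‖x‖*_α = inf {t | ν(x,t) ≤ 1 - α}. -/
noncomputable def alphaAntiNorm (nu : V → ℝ → ℝ) (α : ℝ) (x : V) : ℝ :=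
  sInf {t : ℝ | nu x t ≤ 1 - α}

/-- Condition (vi): if ν(x,t) < 1 for all t > 0 then x = 0. -/
def CondVI (nu : V → ℝ → ℝ) : Prop :=
  ∀ x : V, (∀ t > 0, nu x t < 1) → x = 0

/-- Condition (vii): t ↦ ν(x,t) is continuous and strictly decreasing
on {t | 0 < ν(x,t) < 1}. -/
def CondVII (nu : V → ℝ → ℝ) : Prop :=
  ∀ x : V, Continuous (nu x) ∧ StrictAntiOn (nu x) {t : ℝ | 0 < nu x t ∧ nu x t < 1}

end Defs


lemma nu_antitone' {V : Type*} [AddCommGroup V] [Module ℝ V] {d : ℝ → ℝ → ℝ}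
    (hd : IsTConorm d) {nu : V → ℝ → ℝ} (h : IsFuzzyAntiNorm V d nu)
    (x : V) {s t : ℝ} (hs : 0 < s) (hst : s ≤ t) : nu x t ≤ nu x s := by
  rcases eq_or_lt_of_le hst with rfl | hlt
  · exact le_refl _
  · have h0 : nu (0:V) (t - s) = 0 := (h.eq_zero_iff 0 _ (by linarith)).2 rfl
    have key := h.add_le x 0 s (t - s)
    rw [add_zero, h0] at key
    have ht : s + (t - s) = t := by ring
    rw [ht] at key
    calc nu x t ≤ d (nu x s) 0 := key
      _ = nu x s := hd.zero_right _ (h.mem_Icc x s)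

theorem fuzzy_anti_continuous_iff_sequentially
    {U V : Type*} [AddCommGroup U] [Module ℝ U] [AddCommGroup V] [Module ℝ V]
    {dU dV : ℝ → ℝ → ℝ} (hdU : IsTConorm dU) (hdV : IsTConorm dV)
    {nuU : U → ℝ → ℝ} {nuV : V → ℝ → ℝ}
    (hU : IsFuzzyAntiNorm U dU nuU) (hV : IsFuzzyAntiNorm V dV nuV)
    (T : U → V) (x₀ : U) :
    FuzzyAntiContinuousAt nuU nuV T x₀ ↔ SeqFuzzyAntiContinuousAt nuU nuV T x₀ := by
  constructor
  · -- continuity → sequential continuity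
    intro hc xs hxs t ht
    rw [NormedAddCommGroup.tendsto_nhds_zero]
    intro ε hε
    set α : ℝ := min ε 1 / 2 with hα
    have hα0 : 0 < α := by positivity
    have hα1 : α < 1 := by
      have : min ε 1 ≤ 1 := min_le_right _ _
      simp only [hα]; linarith
    have hαε : α < ε := by
      have : min ε 1 ≤ ε := min_le_left _ _
      simp only [hα]; linarith
    obtain ⟨δ, hδ, β, hβ, hsmall⟩ := hc t ht α ⟨hα0, hα1⟩
    have := (hxs δ hδ).eventually (Filter.Tendsto.eventually_lt_const hβ.1 tendsto_id)
    filter_upwards [this] with n hn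
    have h1 := hsmall (xs n) hn
    have h0 := (hV.mem_Icc (T (xs n) - T x₀) t).1
    rw [Real.norm_eq_abs, abs_of_nonneg h0]
    linarith
  · -- sequential continuity → continuity
    intro hs
    by_contra hnc
    simp only [FuzzyAntiContinuousAt, not_forall] at hnc
    obtain ⟨ε, hε, α, hα, hbad⟩ := hnc
    push_neg at hbad
    have hpick : ∀ n : ℕ, ∃ x : U,
        nuU (x - x₀) (1 / (n + 1 : ℝ)) < 1 / (n + 2 : ℝ) ∧ α ≤ nuV (T x - T x₀) ε := by
      intro n
      obtain ⟨x, hx1, hx2⟩ := hbad (1 / (n + 1 : ℝ)) (by positivity) (1 / (n + 2 : ℝ))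
        ⟨by positivity, by rw [div_lt_one (by positivity)]; linarith⟩
      exact ⟨x, hx1, hx2⟩
    choose xs hxs1 hxs2 using hpick
    have hconv : ∀ t > 0, Tendsto (fun n => nuU (xs n - x₀) t) atTop (nhds 0) := by
      intro t ht
      apply squeeze_zero' (Eventually.of_forall fun n => (hU.mem_Icc _ _).1)
      · -- eventually nuU (xs n - x₀) t ≤ 1/(n+2)
        have : ∀ᶠ n : ℕ in atTop, (1 : ℝ) / (n + 1) ≤ t := by
          obtain ⟨N, hN⟩ := exists_nat_gt (1 / t)
          filter_upwards [eventually_ge_atTop N] with n hn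
          rw [div_le_iff₀ (by positivity)]
          rw [div_lt_iff₀ ht] at hN
          have : (N : ℝ) ≤ n := by exact_mod_cast hn
          nlinarith
        filter_upwards [this] with n hn
        have h1 := nu_antitone' hdU hU (xs n - x₀) (by positivity : (0:ℝ) < 1/(n+1)) hn
        have h2 := hxs1 n
        linarith
      · have : Tendsto (fun n : ℕ => (1 : ℝ) / (n + 2)) atTop (nhds 0) := by
          apply tendsto_one_div_add_atTop_nhds_zero_nat.comp (tendsto_add_atTop_nat 1) |>.congr
          intro n; simp; ring_nf
        exact this
    have := (hs xs hconv ε hε).eventually (Filter.Tendsto.eventually_lt_const hα.1 tendsto_id)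
    obtain ⟨n, hn⟩ := this.exists
    exact absurd (hxs2 n) (not_le.2 hn)
end

section
/- Let (U, ν_U) and (V, ν_V) be fuzzy anti-normed real linear spaces and let T : U → V be a linear operator. If T is strongly fuzzy anti-continuous at some point x₀ ∈ U, then T is strongly fuzzy anti-continuous at every point of U. -/
open Filter Topology

theorem strongly_fuzzy_anti_continuous_at_point_implies_everywhere
    {U V : Type*} [AddCommGroup U] [Module ℝ U] [AddCommGroup V] [Module ℝ V]
    {dU dV : ℝ → ℝ → ℝ} (hdU : IsTConorm dU) (hdV : IsTConorm dV)
    {nuU : U → ℝ → ℝ} {nuV : V → ℝ → ℝ}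
    (hU : IsFuzzyAntiNorm U dU nuU) (hV : IsFuzzyAntiNorm V dV nuV)
    (T : U →ₗ[ℝ] V) (x₀ : U)
    (h : StronglyFuzzyAntiContinuousAt nuU nuV T x₀) :
    ∀ x : U, StronglyFuzzyAntiContinuousAt nuU nuV T x := by
  intro y ε hε
  obtain ⟨δ, hδ, hineq⟩ := h ε hε
  refine ⟨δ, hδ, fun x => ?_⟩
  have := hineq (x - y + x₀)
  simpa [map_add, map_sub, sub_add_eq_sub_sub, add_sub_cancel_right,
    sub_sub_cancel, sub_add_cancel] using this
end

section
/- Let (U, ν_U) and (V, ν_V) be fuzzy anti-normed real linear spaces and let T : U → V be a linear operator. Then T is strongly fuzzy anti-continuous at every point of U if and only if T is strongly fuzzy anti-bounded. -/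
open Filter Topology

theorem strongly_fuzzy_anti_continuous_iff_strongly_bounded
    {U V : Type*} [AddCommGroup U] [Module ℝ U] [AddCommGroup V] [Module ℝ V]
    {dU dV : ℝ → ℝ → ℝ} (hdU : IsTConorm dU) (hdV : IsTConorm dV)
    {nuU : U → ℝ → ℝ} {nuV : V → ℝ → ℝ}
    (hU : IsFuzzyAntiNorm U dU nuU) (hV : IsFuzzyAntiNorm V dV nuV)
    (T : U →ₗ[ℝ] V) :
    (∀ x : U, StronglyFuzzyAntiContinuousAt nuU nuV T x) ↔
      StronglyFuzzyAntiBounded nuU nuV T := by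
  constructor
  · intro h
    obtain ⟨δ, hδ, hδ'⟩ := h 0 1 one_pos
    refine ⟨1/δ, by positivity, fun x t ht => ?_⟩
    have hne : (1/t : ℝ) ≠ 0 := by positivity
    have hy := hδ' ((1/t) • x)
    rw [map_smul, map_zero, sub_zero, sub_zero] at hy
    rw [hV.smul_eq _ _ _ one_pos hne, hU.smul_eq _ _ _ hδ hne] at hy
    have h1 : (1 : ℝ) / |1/t| = t := by
      rw [abs_of_pos (by positivity)]; field_simp
    have h2 : δ / |1/t| = t / (1/δ) := by
      rw [abs_of_pos (by positivity)]; field_simp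
    rwa [h1, h2] at hy
  · rintro ⟨M, hM, hB⟩ x₀ ε hε
    refine ⟨ε/M, by positivity, fun x => ?_⟩
    have := hB (x - x₀) ε hε
    rwa [map_sub] at this
end

section
/- Let (U, ν_U) and (V, ν_V) be fuzzy anti-normed real linear spaces and let T : U → V be a linear operator. If T is weakly fuzzy anti-continuous at some point x₀ ∈ U, then T is weakly fuzzy anti-continuous at every point of U. -/
open Filter Topology

theorem weakly_fuzzy_anti_continuous_at_point_implies_everywhere
    {U V : Type*} [AddCommGroup U] [Module ℝ U] [AddCommGroup V] [Module ℝ V]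
    {dU dV : ℝ → ℝ → ℝ} (hdU : IsTConorm dU) (hdV : IsTConorm dV)
    {nuU : U → ℝ → ℝ} {nuV : V → ℝ → ℝ}
    (hU : IsFuzzyAntiNorm U dU nuU) (hV : IsFuzzyAntiNorm V dV nuV)
    (T : U →ₗ[ℝ] V) (x₀ : U)
    (h : WeaklyFuzzyAntiContinuousAt nuU nuV T x₀) :
    ∀ x : U, WeaklyFuzzyAntiContinuousAt nuU nuV T x := by
  intro y ε hε α hα
  obtain ⟨δ, hδ, H⟩ := h ε hε α hα
  refine ⟨δ, hδ, fun x hx => ?_⟩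
  have h1 : (x - y + x₀) - x₀ = x - y := by abel
  have h2 : T (x - y + x₀) - T x₀ = T x - T y := by
    simp [map_add, map_sub]
  have := H (x - y + x₀) (by rw [h1]; exact hx)
  rwa [h2] at this
end

section
/- Let (U, ν_U) and (V, ν_V) be fuzzy anti-normed real linear spaces and let T : U → V be a linear operator. Then T is weakly fuzzy anti-continuous at every point of U if and only if T is weakly fuzzy anti-bounded. -/
open Filter Topology

theorem weakly_fuzzy_anti_continuous_iff_weakly_bounded
    {U V : Type*} [AddCommGroup U] [Module ℝ U] [AddCommGroup V] [Module ℝ V]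
    {dU dV : ℝ → ℝ → ℝ} (hdU : IsTConorm dU) (hdV : IsTConorm dV)
    {nuU : U → ℝ → ℝ} {nuV : V → ℝ → ℝ}
    (hU : IsFuzzyAntiNorm U dU nuU) (hV : IsFuzzyAntiNorm V dV nuV)
    (T : U →ₗ[ℝ] V) :
    (∀ x : U, WeaklyFuzzyAntiContinuousAt nuU nuV T x) ↔
      WeaklyFuzzyAntiBounded nuU nuV T := by
  constructor
  · intro h α hα
    obtain ⟨δ, hδ, hprop⟩ := h 0 1 one_pos α hα
    refine ⟨1 / δ, by positivity, fun x t ht hx => ?_⟩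
    have htne : (t : ℝ)⁻¹ ≠ 0 := by positivity
    have h1 : nuU (t⁻¹ • x - 0) δ ≤ 1 - α := by
      rw [sub_zero, hU.smul_eq t⁻¹ x δ hδ htne]
      have : δ / |t⁻¹| = t / (1 / δ) := by
        rw [abs_of_pos (by positivity)]
        field_simp
      rwa [this]
    have h2 := hprop _ h1
    rw [map_smul, map_zero, sub_zero,
      hV.smul_eq t⁻¹ (T x) 1 one_pos htne] at h2
    have : (1 : ℝ) / |t⁻¹| = t := by
      rw [abs_of_pos (by positivity)]; field_simp
    rwa [this] at h2
  · intro h x₀ ε hε α hα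
    obtain ⟨M, hM, hprop⟩ := h α hα
    refine ⟨ε / M, by positivity, fun x hx => ?_⟩
    have := hprop (x - x₀) ε hε hx
    rwa [map_sub] at this
end

section
/- Let (V, ‖·‖) be a real normed linear space. Define ν₁ : V × ℝ → [0,1] by ν₁(x,t) = 2‖x‖²/(t² + ‖x‖²) if t > ‖x‖ and ν₁(x,t) = 1 if t ≤ ‖x‖. Then ν₁ is a fuzzy anti-norm on V with respect to the t-conorm a ⋄ b = max{a,b}. -/
open Filter Topology

/-- ν₁(x,t) = 2‖x‖²/(t² + ‖x‖²) if t > ‖x‖, and 1 if t ≤ ‖x‖. -/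
noncomputable def nuB {V : Type*} [NormedAddCommGroup V] (x : V) (t : ℝ) : ℝ :=
  if ‖x‖ < t then 2 * ‖x‖ ^ 2 / (t ^ 2 + ‖x‖ ^ 2) else 1

lemma nuB_nonneg {V : Type*} [NormedAddCommGroup V] (x : V) (t : ℝ) : 0 ≤ nuB x t := by
  unfold nuB
  split
  · next h =>
    have ht : (0:ℝ) < t := lt_of_le_of_lt (norm_nonneg x) h
    positivity
  · norm_num

lemma nuB_le_one {V : Type*} [NormedAddCommGroup V] (x : V) (t : ℝ) : nuB x t ≤ 1 := by
  unfold nuB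
  split
  · next h =>
    have ht : (0:ℝ) < t := lt_of_le_of_lt (norm_nonneg x) h
    have hx := norm_nonneg x
    rw [div_le_one (by positivity)]
    nlinarith
  · exact le_refl 1

lemma nuB_key (a b c s t : ℝ) (ha : 0 ≤ a) (hb : 0 ≤ b) (hc : 0 ≤ c)
    (hcab : c ≤ a + b) (has : a < s) (hbt : b < t) (hab : b * s ≤ a * t) :
    2 * c ^ 2 / ((s + t) ^ 2 + c ^ 2) ≤ 2 * a ^ 2 / (s ^ 2 + a ^ 2) := by
  have hs : 0 < s := lt_of_le_of_lt ha has
  have ht : 0 < t := lt_of_le_of_lt hb hbt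
  rw [div_le_div_iff₀ (by positivity) (by positivity)]
  have h1 : c * s ≤ a * (s + t) := by nlinarith
  nlinarith [sq_nonneg (c * s - a * (s + t)), mul_nonneg hc hs.le, mul_nonneg ha (by positivity : (0:ℝ) ≤ s + t)]

theorem nuB_isFuzzyAntiNorm
    {V : Type*} [NormedAddCommGroup V] [NormedSpace ℝ V] :
    IsFuzzyAntiNorm V (fun a b => max a b) (nuB : V → ℝ → ℝ) := by
  constructor
  · exact fun x t => ⟨nuB_nonneg x t, nuB_le_one x t⟩
  · intro x t ht
    unfold nuB
    rw [if_neg (by linarith [norm_nonneg x])]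
  · intro x t ht
    constructor
    · intro h
      unfold nuB at h
      by_cases hx : ‖x‖ < t
      · rw [if_pos hx] at h
        have hden : (0:ℝ) < t ^ 2 + ‖x‖ ^ 2 := by positivity
        have : 2 * ‖x‖ ^ 2 = 0 := by
          field_simp at h
          linarith [sq_nonneg ‖x‖, h]
        have : ‖x‖ = 0 := by nlinarith [sq_nonneg ‖x‖]
        exact norm_eq_zero.mp this
      · rw [if_neg hx] at h; norm_num at h
    · intro h
      subst h
      unfold nuB
      rw [if_pos (by simpa using ht)]
      simp
  · intro c x t ht hc
    have hac : 0 < |c| := abs_pos.mpr hc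
    unfold nuB
    rw [norm_smul, Real.norm_eq_abs]
    have hcond : |c| * ‖x‖ < t ↔ ‖x‖ < t / |c| := by
      rw [lt_div_iff₀ hac, mul_comm]
    by_cases h : ‖x‖ < t / |c|
    · rw [if_pos (hcond.mpr h), if_pos h]
      have hc2 : (0:ℝ) < |c| ^ 2 := by positivity
      rw [div_pow, mul_pow]
      rw [div_add' _ _ _ (ne_of_gt hc2)] -- t^2/|c|^2 + ‖x‖^2 = (t^2 + ‖x‖^2*|c|^2)/|c|^2
      · field_simp
    · rw [if_neg (fun hh => h (hcond.mp hh)), if_neg h]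
  · intro x y s t
    by_cases hx : ‖x‖ < s
    · by_cases hy : ‖y‖ < t
      · by_cases hxy : ‖x + y‖ < s + t
        · have ha := norm_nonneg x
          have hb := norm_nonneg y
          have hcn := norm_nonneg (x + y)
          have hcab := norm_add_le x y
          unfold nuB
          rw [if_pos hxy, if_pos hx, if_pos hy]
          rcases le_total (‖y‖ * s) (‖x‖ * t) with hcase | hcase
          · exact le_max_of_le_left (nuB_key ‖x‖ ‖y‖ ‖x + y‖ s t ha hb hcn hcab hx hy hcase)
          · refine le_max_of_le_right ?_
            have := nuB_key ‖y‖ ‖x‖ ‖x + y‖ t s hb ha hcn (by linarith) hy hx hcase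
            calc 2 * ‖x + y‖ ^ 2 / ((s + t) ^ 2 + ‖x + y‖ ^ 2)
                = 2 * ‖x + y‖ ^ 2 / ((t + s) ^ 2 + ‖x + y‖ ^ 2) := by ring_nf
              _ ≤ _ := this
        · exact absurd (lt_of_le_of_lt (norm_add_le x y) (by linarith)) hxy
      · refine le_trans (nuB_le_one _ _) (le_max_of_le_right ?_)
        unfold nuB; rw [if_neg hy]
    · refine le_trans (nuB_le_one _ _) (le_max_of_le_left ?_)
      unfold nuB; rw [if_neg hx]
  · intro x
    have h1 : Filter.Tendsto (fun t : ℝ => 2 * ‖x‖ ^ 2 / (t ^ 2 + ‖x‖ ^ 2))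
        Filter.atTop (nhds 0) := by
      apply Filter.Tendsto.div_atTop tendsto_const_nhds
      apply Filter.tendsto_atTop_add_const_right
      exact tendsto_pow_atTop (by norm_num)
    refine Filter.Tendsto.congr' ?_ h1
    filter_upwards [Filter.eventually_gt_atTop ‖x‖] with t ht
    unfold nuB; rw [if_pos ht]
end

section
/- Let (V, ‖·‖) be a real normed linear space. Define ν₁(x,t) = 2‖x‖²/(t² + ‖x‖²) if t > ‖x‖ and ν₁(x,t) = 1 if t ≤ ‖x‖, and ν₂(x,t) = ‖x‖/(t + ‖x‖) for t > 0 and ν₂(x,t) = 1 for t ≤ 0. Then the identity operator T(x) = x from (V,ν₁) to (V,ν₂) is weakly fuzzy anti-bounded; in fact for each α ∈ (0,1), M_α = 1/(1-α) witnesses: ν₁(x, t/M_α) ≤ 1 - α implies ν₂(x, t) ≤ 1 - α, for all x ∈ V and t > 0. -/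
open Filter Topology

/-- ν₂(x,t) = ‖x‖/(t + ‖x‖) for t > 0, and 1 for t ≤ 0. -/
noncomputable def nuC {V : Type*} [NormedAddCommGroup V] (x : V) (t : ℝ) : ℝ :=
  if 0 < t then ‖x‖ / (t + ‖x‖) else 1

lemma key_aux {V : Type*} [NormedAddCommGroup V] :
    ∀ α ∈ Set.Ioo (0:ℝ) 1, ∀ x : V, ∀ t > 0,
      nuB x (t / (1 / (1 - α))) ≤ 1 - α → nuC x t ≤ 1 - α := by
  intro α hα x t ht h
  obtain ⟨hα0, hα1⟩ := hα
  have h1 : (0:ℝ) < 1 - α := by linarith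
  have hs : t / (1 / (1 - α)) = t * (1 - α) := by
    field_simp
  rw [hs] at h
  rw [nuB] at h
  rw [nuC, if_pos ht]
  split_ifs at h with hlt
  · have hx : (0:ℝ) ≤ ‖x‖ := norm_nonneg x
    rw [div_le_iff₀ (by linarith)]
    nlinarith
  · linarith

theorem id_weakly_fuzzy_anti_bounded
    {V : Type*} [NormedAddCommGroup V] [NormedSpace ℝ V] :
    WeaklyFuzzyAntiBounded (nuB : V → ℝ → ℝ) (nuC : V → ℝ → ℝ) (id : V → V) ∧
      ∀ α ∈ Set.Ioo (0:ℝ) 1, ∀ x : V, ∀ t > 0,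
        nuB x (t / (1 / (1 - α))) ≤ 1 - α → nuC x t ≤ 1 - α := by
  constructor
  · intro α hα
    refine ⟨1 / (1 - α), by simp only [one_div, inv_pos]; linarith [hα.2], ?_⟩
    intro x t ht h
    exact key_aux α hα x t ht h
  · exact key_aux
end
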